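/- arXiv:1107.2862 — 3 statements merged into one kernel-verified Lean document; each statement's English description precedes it below -/
import Mathlib

section
/- Let Γ be a group of affine transformations of ℝ³ of the form x ↦ A x + b with linear part A ∈ O(2,1). Suppose Γ acts freely on ℝ³ (every element other than the identity has no fixed point) and Γ contains no nontrivial translation. Then every element of Γ has linear part in SO(2,1), i.e., every linear part has determinant 1. (Hence every Margulis spacetime is orientable.) -/
/-!
Let `γ x = A x + b` with `A ∈ O(2,1)` and `det A = -1`. If `1` is not an eigenvalue of `A`, then
`γ` has a fixed point. Otherwise, since `A⁻¹ = η Aᵀ η` has the same trace `τ` as `A`, the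
characteristic polynomial `t³ - τ t² - τ t + 1` of `A` vanishes at `1`, so it is `(t - 1)² (t + 1)`.
Then `C = A² - 1` satisfies `C² = 0` and is skew for the Minkowski form, which in signature `(2,1)`
forces `C = 0`. So `γ²` is a translation, hence trivial, and `γ` fixes the midpoint of `0` and
`γ 0`. Either way the action is not free.
-/

open Matrix

def minkowski (x y : Fin 3 → ℝ) : ℝ := x 0 * y 0 + x 1 * y 1 - x 2 * y 2

theorem AffineMap.exists_apply_eq_self_of_det_linear_sub_id_ne_zero {k V : Type*} [Field k]
    [AddCommGroup V] [Module k V] [FiniteDimensional k V] (f : V →ᵃ[k] V)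
    (h : LinearMap.det (f.linear - LinearMap.id) ≠ 0) : ∃ p, f p = p := by
  obtain ⟨p, hp⟩ := (Module.End.isUnit_iff _).1
    ((LinearMap.isUnit_iff_isUnit_det _).2 h.isUnit) |>.surjective (-f 0)
  refine ⟨p, ?_⟩
  rw [LinearMap.sub_apply, LinearMap.id_apply] at hp
  calc f p = f.linear p + f 0 := congrFun f.decomp p
    _ = (f.linear p - p) + f 0 + p := by abel
    _ = p := by rw [hp]; abel

theorem AffineEquiv.apply_midpoint_eq_self_of_mul_self_eq_one {k V P : Type*} [Ring k]
    [Invertible (2 : k)] [AddCommGroup V] [Module k V] [AddTorsor V P] {f : P ≃ᵃ[k] P}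
    (hf : f * f = 1) (x : P) :
    f (midpoint k x (f x)) = midpoint k x (f x) := by
  have hx : f (f x) = x := congrArg (fun g : P ≃ᵃ[k] P => g x) hf
  rw [f.map_midpoint, hx, midpoint_comm]

theorem Matrix.det_sub_one_fin_three {R : Type*} [CommRing R] (M : Matrix (Fin 3) (Fin 3) R) :
    (M - 1).det = M.det - M.adjugate.trace + M.trace - 1 := by
  rw [adjugate_fin_three, trace_fin_three_of, trace_fin_three, det_fin_three, det_fin_three]
  simp only [sub_apply, one_apply, Fin.isValue, ↓reduceIte, Fin.reduceEq]
  ring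

theorem Matrix.cayleyHamilton_fin_three {R : Type*} [CommRing R] (M : Matrix (Fin 3) (Fin 3) R) :
    M ^ 3 - M.trace • M ^ 2 + M.adjugate.trace • M - M.det • 1 = 0 := by
  rw [adjugate_fin_three, trace_fin_three_of, trace_fin_three, det_fin_three]
  ext i j
  fin_cases i <;> fin_cases j <;>
    simp only [sub_apply, add_apply, smul_apply, smul_eq_mul, one_apply, zero_apply, pow_succ,
      pow_zero, one_mul, mul_apply, Fin.sum_univ_three, Fin.zero_eta, Fin.mk_one, Fin.reduceFinMk,
      Fin.isValue, ↓reduceIte, Fin.reduceEq] <;>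
    ring

theorem sq_sub_one_eq_one_sub_sq_of_mul_eq_one {R : Type*} [Ring R] {u v : R} (hvu : v * u = 1)
    (h : (u - 1) ^ 2 * (u + 1) = 0) : u ^ 2 - 1 = 1 - v ^ 2 := by
  have hfix : u * (u ^ 2 - 1) = u ^ 2 - 1 := by rw [← sub_eq_zero, ← h]; noncomm_ring
  have hcancel : ∀ x, v * (u * x) = x := fun x => by rw [← mul_assoc, hvu, one_mul]
  calc u ^ 2 - 1 = v * (v * (u * (u * (u ^ 2 - 1)))) := by rw [hcancel, hcancel]
    _ = v * (v * (u * u)) - v * v := by rw [hfix, hfix, sq u]; noncomm_ring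
    _ = 1 - v ^ 2 := by rw [hcancel, hvu, sq]

def minkowskiGram : Matrix (Fin 3) (Fin 3) ℝ := diagonal ![1, 1, -1]

local notation "η" => minkowskiGram

theorem minkowskiGram_mul_self : η * η = 1 := by
  rw [minkowskiGram, diagonal_mul_diagonal, ← diagonal_one]
  congr 1
  ext i
  fin_cases i <;> simp

theorem mul_minkowskiGram_mul_minkowskiGram (A : Matrix (Fin 3) (Fin 3) ℝ) : A * η * η = A := by
  rw [mul_assoc, minkowskiGram_mul_self, mul_one]

theorem det_minkowskiGram : det η = -1 := by
  simp [minkowskiGram, Fin.prod_univ_three]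

theorem trace_minkowskiGram_mul_transpose_mul_minkowskiGram (M : Matrix (Fin 3) (Fin 3) ℝ) :
    (η * Mᵀ * η).trace = M.trace := by
  rw [trace_mul_cycle, minkowskiGram_mul_self, one_mul, trace_transpose]

theorem minkowski_eq_dotProduct_mulVec (x y : Fin 3 → ℝ) :
    minkowski x y = x ⬝ᵥ (η *ᵥ y) := by
  simp only [minkowski, minkowskiGram, mulVec_diagonal, dotProduct, Fin.sum_univ_three,
    cons_val_zero, cons_val_one, cons_val]
  ring

theorem eq_zero_of_minkowski_skew_of_mul_self_eq_zero {C : Matrix (Fin 3) (Fin 3) ℝ}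
    (hskew : η * Cᵀ * η = -C) (hsq : C * C = 0) : C = 0 := by
  have e : ∀ i j, (η * Cᵀ * η) i j = -C i j := fun i j => by rw [hskew]; rfl
  have s : ∀ i j, (C * C) i j = 0 := fun i j => by rw [hsq]; rfl
  simp only [minkowskiGram, mul_diagonal, diagonal_mul, transpose_apply] at e
  simp only [mul_apply, Fin.sum_univ_three] at s
  have h00 := e 0 0; have h11 := e 1 1; have h22 := e 2 2
  have h10 := e 1 0; have h20 := e 2 0; have h21 := e 2 1
  have s00 := s 0 0; have s22 := s 2 2
  simp only [cons_val_zero, cons_val_one, cons_val, one_mul, mul_one, neg_mul, mul_neg,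
    neg_neg, neg_inj] at h00 h11 h22 h10 h20 h21
  -- `(C * C) 2 2 = C 0 2 ^ 2 + C 1 2 ^ 2` and then `(C * C) 0 0 = C 0 2 ^ 2 - C 0 1 ^ 2`
  rw [h20, h21, show C 2 2 = 0 by linarith] at s22
  rw [h10, h20, show C 0 0 = 0 by linarith] at s00
  have h02 : C 0 2 = 0 := by nlinarith
  have h12 : C 1 2 = 0 := by nlinarith
  have h01 : C 0 1 = 0 := by nlinarith
  ext i j
  fin_cases i <;> fin_cases j <;>
    simp only [Matrix.zero_apply, Fin.zero_eta, Fin.mk_one, Fin.reduceFinMk, Fin.isValue] <;>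
    linarith

def IsLorentz (M : Matrix (Fin 3) (Fin 3) ℝ) : Prop := Mᵀ * η * M = η

theorem isLorentz_of_forall_minkowski_mulVec {M : Matrix (Fin 3) (Fin 3) ℝ}
    (h : ∀ x y, minkowski (M *ᵥ x) (M *ᵥ y) = minkowski x y) : IsLorentz M := by
  refine toBilin'.injective (LinearMap.ext₂ fun x y => ?_)
  rw [toBilin'_apply', toBilin'_apply', ← mulVec_mulVec, ← mulVec_mulVec, dotProduct_mulVec,
    vecMul_transpose, ← minkowski_eq_dotProduct_mulVec, ← minkowski_eq_dotProduct_mulVec, h]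

namespace IsLorentz

variable {M : Matrix (Fin 3) (Fin 3) ℝ}

theorem minkowskiGram_mul_transpose_mul_minkowskiGram_mul (hM : IsLorentz M) :
    η * Mᵀ * η * M = 1 := by
  calc η * Mᵀ * η * M = η * (Mᵀ * η * M) := by noncomm_ring
    _ = 1 := by rw [hM, minkowskiGram_mul_self]

theorem det_eq_one_or_neg_one (hM : IsLorentz M) : M.det = 1 ∨ M.det = -1 := by
  have h := congrArg det hM
  rw [det_mul, det_mul, det_transpose, det_minkowskiGram] at h
  exact mul_self_eq_one_iff.1 (by linarith)

theorem mul_self_eq_one (hM : IsLorentz M) (hdet : M.det = -1) (h1 : (M - 1).det = 0) :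
    M * M = 1 := by
  have hNM : η * Mᵀ * η * M = 1 := hM.minkowskiGram_mul_transpose_mul_minkowskiGram_mul
  have hadj : M.adjugate = -(η * Mᵀ * η) := by
    calc M.adjugate = M.adjugate * M * (η * Mᵀ * η) := by
          rw [mul_assoc, mul_eq_one_comm.1 hNM, mul_one]
      _ = -(η * Mᵀ * η) := by rw [adjugate_mul, hdet]; simp
  have htr : M.trace = 1 := by
    have h := det_sub_one_fin_three M
    rw [h1, hdet, hadj, trace_neg, trace_minkowskiGram_mul_transpose_mul_minkowskiGram] at h
    linarith
  have hCH : (M - 1) ^ 2 * (M + 1) = 0 := by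
    rw [← cayleyHamilton_fin_three M, hadj, trace_neg,
      trace_minkowskiGram_mul_transpose_mul_minkowskiGram, htr, hdet]
    simp only [one_smul, neg_smul]
    noncomm_ring
  have hsq : (M ^ 2 - 1) * (M ^ 2 - 1) = 0 := by
    calc (M ^ 2 - 1) * (M ^ 2 - 1) = (M + 1) * ((M - 1) ^ 2 * (M + 1)) := by noncomm_ring
      _ = 0 := by rw [hCH, mul_zero]
  have hskew : η * (M ^ 2 - 1)ᵀ * η = -(M ^ 2 - 1) := by
    calc η * (M ^ 2 - 1)ᵀ * η = (η * Mᵀ * η) ^ 2 - 1 := by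
          simp only [transpose_sub, transpose_one, sq, transpose_mul, mul_sub, sub_mul, mul_one,
            ← mul_assoc, mul_minkowskiGram_mul_minkowskiGram, minkowskiGram_mul_self]
      _ = -(M ^ 2 - 1) := by rw [sq_sub_one_eq_one_sub_sq_of_mul_eq_one hNM hCH, neg_sub]
  rw [← sq, ← sub_eq_zero]
  exact eq_zero_of_minkowski_skew_of_mul_self_eq_zero hskew hsq

end IsLorentz

/-- If a group Γ of affine transformations of ℝ³ with linear parts in O(2,1)
acts freely and contains no nontrivial translation, then every linear part
has determinant 1, i.e. lies in SO(2,1). -/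
theorem margulis_spacetime_orientable
    (Γ : Subgroup ((Fin 3 → ℝ) ≃ᵃ[ℝ] (Fin 3 → ℝ)))
    (hO : ∀ γ ∈ Γ, ∀ x y : Fin 3 → ℝ,
      minkowski (γ.linear x) (γ.linear y) = minkowski x y)
    (hfree : ∀ γ ∈ Γ, γ ≠ 1 → ∀ p : Fin 3 → ℝ, γ p ≠ p)
    (htrans : ∀ γ ∈ Γ, (∀ x : Fin 3 → ℝ, γ.linear x = x) → γ = 1) :
    ∀ γ ∈ Γ, LinearMap.det (γ.linear : (Fin 3 → ℝ) →ₗ[ℝ] (Fin 3 → ℝ)) = 1 := by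
  intro γ hγ
  set L : (Fin 3 → ℝ) →ₗ[ℝ] (Fin 3 → ℝ) := (γ.linear : (Fin 3 → ℝ) →ₗ[ℝ] (Fin 3 → ℝ))
  have hM : IsLorentz (LinearMap.toMatrix' L) := isLorentz_of_forall_minkowski_mulVec fun x y => by
    rw [LinearMap.toMatrix'_mulVec, LinearMap.toMatrix'_mulVec]
    exact hO γ hγ x y
  rw [← LinearMap.det_toMatrix']
  refine hM.det_eq_one_or_neg_one.resolve_right fun hdet => ?_
  have hγ1 : γ ≠ 1 := by
    rintro rfl
    rw [LinearMap.det_toMatrix'] at hdet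
    simp only [L, AffineEquiv.one_def, AffineEquiv.linear_refl, LinearEquiv.refl_toLinearMap,
      LinearMap.det_id] at hdet
    norm_num at hdet
  obtain ⟨p, hp⟩ : ∃ p, γ p = p := by
    by_cases h1 : LinearMap.det (L - LinearMap.id) = 0
    · rw [← LinearMap.det_toMatrix', map_sub, LinearMap.toMatrix'_id] at h1
      have hLL : L * L = 1 := LinearMap.toMatrix'.injective <| by
        rw [LinearMap.toMatrix'_mul, LinearMap.toMatrix'_one, hM.mul_self_eq_one hdet h1]
      have hγγ : γ * γ = 1 := htrans _ (mul_mem hγ hγ) (LinearMap.congr_fun hLL)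
      exact ⟨_, AffineEquiv.apply_midpoint_eq_self_of_mul_self_eq_one hγγ 0⟩
    · exact AffineMap.exists_apply_eq_self_of_det_linear_sub_id_ne_zero γ.toAffineMap h1
  exact hfree γ hγ hγ1 p hp
end

section
/- Let g ∈ O(2,1), v⁰ ∈ ℝ³ with g v⁰ = v⁰, and u ∈ ℝ³ with ⟨u, v⁰⟩ ≠ 0. Let γ be the affine transformation x ↦ g x + u. Then for every nonzero integer n and every p ∈ ℝ³, γⁿ(p) ≠ p. In particular the cyclic group generated by γ is infinite and acts freely on ℝ³. -/
/-! The linear functional `x ↦ ⟨x, v⁰⟩` is `g`-invariant, so `γ` shifts it by the constant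
`⟨u, v⁰⟩ ≠ 0` and `γⁿ` shifts it by `n ⟨u, v⁰⟩ ≠ 0`; hence `γⁿ` moves every point. -/

namespace AffineEquiv

variable {k V P M : Type*} [Ring k] [AddCommGroup V] [Module k V] [AddTorsor V P]
  [AddCommGroup M] {γ : P ≃ᵃ[k] P} {φ : P → M} {c : M}

theorem map_zpow_apply_of_map_apply (h : ∀ x, φ (γ x) = φ x + c) (n : ℤ) (x : P) :
    φ ((γ ^ n) x) = φ x + n • c := by
  induction n using Int.induction_on generalizing x with
  | zero => simp
  | succ n ih =>
    rw [zpow_add_one, coe_mul, Function.comp_apply, ih, h, add_smul, one_smul]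
    abel
  | pred n ih =>
    have hinv : φ (γ⁻¹ x) = φ x - c := by
      rw [eq_sub_iff_add_eq, ← h]
      exact congrArg φ (γ.apply_symm_apply x)
    rw [zpow_sub_one, coe_mul, Function.comp_apply, ih, hinv, sub_smul, one_smul]
    abel

theorem zpow_apply_ne_self_of_map_apply [IsAddTorsionFree M] (h : ∀ x, φ (γ x) = φ x + c)
    (hc : c ≠ 0) {n : ℤ} (hn : n ≠ 0) (x : P) : (γ ^ n) x ≠ x := by
  intro hx
  have hnc : n • c = 0 := by
    simpa [hx] using map_zpow_apply_of_map_apply h n x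
  exact hc ((IsAddTorsionFree.zsmul_eq_zero_iff_right hn).mp hnc)

end AffineEquiv

theorem minkowski_add_left (x y z : Fin 3 → ℝ) :
    minkowski (x + y) z = minkowski x z + minkowski y z := by
  simp only [minkowski, Pi.add_apply]
  ring

theorem minkowski_affine_apply_of_map_fixed {g : (Fin 3 → ℝ) ≃ₗ[ℝ] (Fin 3 → ℝ)}
    {v0 u : Fin 3 → ℝ} (hO : ∀ x, minkowski (g x) (g v0) = minkowski x v0) (hfix : g v0 = v0)
    {γ : (Fin 3 → ℝ) ≃ᵃ[ℝ] (Fin 3 → ℝ)} (hγ : ∀ x, γ x = g x + u) (x : Fin 3 → ℝ) :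
    minkowski (γ x) v0 = minkowski x v0 + minkowski u v0 := by
  rw [hγ, minkowski_add_left, ← hO x, hfix]

/-- If `g ∈ O(2,1)` fixes `v⁰` and `⟨u, v⁰⟩ ≠ 0`, then no nonzero power of the
affine transformation `γ : x ↦ g x + u` has a fixed point; in particular the
cyclic group generated by `γ` is infinite and acts freely on ℝ³. -/
theorem nonzero_margulis_invariant_acts_freely
    (g : (Fin 3 → ℝ) ≃ₗ[ℝ] (Fin 3 → ℝ))
    (hO : ∀ x y : Fin 3 → ℝ, minkowski (g x) (g y) = minkowski x y)
    (v0 : Fin 3 → ℝ) (hfix : g v0 = v0)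
    (u : Fin 3 → ℝ) (hmu : minkowski u v0 ≠ 0)
    (γ : (Fin 3 → ℝ) ≃ᵃ[ℝ] (Fin 3 → ℝ))
    (hγ : ∀ x : Fin 3 → ℝ, γ x = g x + u) :
    (∀ n : ℤ, n ≠ 0 → ∀ p : Fin 3 → ℝ, (γ ^ n) p ≠ p) ∧
      ((Subgroup.zpowers γ : Set ((Fin 3 → ℝ) ≃ᵃ[ℝ] (Fin 3 → ℝ))).Infinite) ∧
      (∀ δ ∈ Subgroup.zpowers γ, δ ≠ 1 → ∀ p : Fin 3 → ℝ, δ p ≠ p) := by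
  have hshift := minkowski_affine_apply_of_map_fixed (fun x ↦ hO x v0) hfix hγ
  have hfree : ∀ n : ℤ, n ≠ 0 → ∀ p, (γ ^ n) p ≠ p := fun _ hn ↦
    AffineEquiv.zpow_apply_ne_self_of_map_apply (φ := (minkowski · v0)) hshift hmu hn
  refine ⟨hfree, ?_, ?_⟩
  · rw [infinite_zpowers, isOfFinOrder_iff_zpow_eq_one]
    rintro ⟨n, hn, hγn⟩
    exact hfree n hn 0 (by rw [hγn]; rfl)
  · rintro δ ⟨n, rfl⟩ hδ
    exact hfree n (by rintro rfl; exact hδ (zpow_zero γ))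
end

section
/- Let g ∈ O(2,1) with g ≠ I, and suppose the fixed subspace ker(g − I) is one-dimensional, spanned by a vector v⁰. Then for u ∈ ℝ³, the affine transformation x ↦ g x + u has a fixed point if and only if ⟨u, v⁰⟩ = 0. Equivalently, the Margulis invariant of a non-elliptic affine isometry vanishes exactly when the isometry has a fixed point. -/
/-- For `g ∈ O(2,1)` with `g ≠ I` whose fixed subspace is the line spanned by
`v⁰`, the affine transformation `x ↦ g x + u` has a fixed point if and only if
the Margulis invariant `⟨u, v⁰⟩` vanishes. -/
theorem margulis_invariant_zero_iff_fixed_point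
    (g : (Fin 3 → ℝ) ≃ₗ[ℝ] (Fin 3 → ℝ))
    (hO : ∀ x y : Fin 3 → ℝ, minkowski (g x) (g y) = minkowski x y)
    (hg : g ≠ LinearEquiv.refl ℝ (Fin 3 → ℝ))
    (v0 : Fin 3 → ℝ) (hv0 : v0 ≠ 0)
    (hfix : ∀ x : Fin 3 → ℝ, g x = x ↔ ∃ c : ℝ, x = c • v0)
    (u : Fin 3 → ℝ) :
    (∃ x : Fin 3 → ℝ, g x + u = x) ↔ minkowski u v0 = 0 := by
  classical
  have hgv0 : g v0 = v0 := (hfix v0).mpr ⟨1, by simp⟩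
  -- the functional w ↦ ⟨w, v0⟩
  let φ : (Fin 3 → ℝ) →ₗ[ℝ] ℝ :=
    { toFun := fun w => minkowski w v0
      map_add' := by intro a b; simp [minkowski]; ring
      map_smul' := by intro c a; simp [minkowski]; ring }
  let f : (Fin 3 → ℝ) →ₗ[ℝ] (Fin 3 → ℝ) := LinearMap.id - g.toLinearMap
  have hfx : ∀ x, f x = x - g x := fun x => rfl
  have hker : LinearMap.ker f = Submodule.span ℝ {v0} := by
    ext x
    rw [LinearMap.mem_ker, hfx, sub_eq_zero, Submodule.mem_span_singleton]
    constructor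
    · intro h
      obtain ⟨c, hc⟩ := (hfix x).mp h.symm
      exact ⟨c, hc.symm⟩
    · rintro ⟨c, hc⟩
      exact ((hfix x).mpr ⟨c, hc.symm⟩).symm
  have htot : Module.finrank ℝ (Fin 3 → ℝ) = 3 := by simp
  have hkerrank : Module.finrank ℝ (LinearMap.ker f) = 1 := by
    rw [hker]; exact finrank_span_singleton hv0
  have hrange : Module.finrank ℝ (LinearMap.range f) = 2 := by
    have := LinearMap.finrank_range_add_finrank_ker f
    rw [hkerrank, htot] at this
    omega
  have hφne : φ ≠ 0 := by
    intro h
    apply hv0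
    have e0 : v0 0 = 0 := by
      have := congrFun (congrArg DFunLike.coe h) (Pi.single 0 1)
      simpa [φ, minkowski, Pi.single_apply] using this
    have e1 : v0 1 = 0 := by
      have := congrFun (congrArg DFunLike.coe h) (Pi.single 1 1)
      simpa [φ, minkowski, Pi.single_apply] using this
    have e2 : v0 2 = 0 := by
      have := congrFun (congrArg DFunLike.coe h) (Pi.single 2 1)
      have h2 : -(v0 2) = 0 := by simpa [φ, minkowski, Pi.single_apply] using this
      linarith
    funext i
    fin_cases i <;> simpa using by assumption
  have hφker : Module.finrank ℝ (LinearMap.ker φ) = 2 := by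
    have hsurj : LinearMap.range φ = ⊤ := by
      rcases LinearMap.surjective_of_ne_zero hφne with h
      exact LinearMap.range_eq_top.mpr h
    have := LinearMap.finrank_range_add_finrank_ker φ
    rw [hsurj, htot] at this
    simp at this
    omega
  have hle : LinearMap.range f ≤ LinearMap.ker φ := by
    rintro w ⟨x, rfl⟩
    have h1 : minkowski (g x) v0 = minkowski x v0 := by
      conv_lhs => rw [← hgv0]
      exact hO x v0
    simp only [LinearMap.mem_ker, hfx]
    show minkowski (x - g x) v0 = 0
    simp [minkowski] at h1 ⊢
    linarith
  have heq : LinearMap.range f = LinearMap.ker φ :=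
    Submodule.eq_of_le_of_finrank_eq hle (by rw [hrange, hφker])
  constructor
  · rintro ⟨x, hx⟩
    have hu : u = f x := by
      rw [hfx, eq_sub_iff_add_eq, add_comm]; exact hx
    have : f x ∈ LinearMap.ker φ := heq ▸ LinearMap.mem_range_self f x
    rw [LinearMap.mem_ker] at this
    rw [hu]; exact this
  · intro hu
    have : u ∈ LinearMap.range f := by
      rw [heq, LinearMap.mem_ker]; exact hu
    obtain ⟨x, hx⟩ := this
    refine ⟨x, ?_⟩
    rw [hfx] at hx
    rw [← hx]; abel
end
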